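/- Coordinate-descent monotonicity for I-Max (discrete setting): let (Ω,P) be a finite probability space with y : Ω → {0,1}, and for a quantizer m (induced by bin edges) and parameters φ define L(m,φ) = Σ_i Σ_{y'} P(m=i, y=y') log( P(y=y') / σ((2y'−1)φ(i)) ). If φ' is defined by φ'(i) = log( P(y=1|m=i)/P(y=0|m=i) ) (assuming 0 < P(y=1|m=i) < 1 for all i), then L(m, φ') ≤ L(m, φ) for every φ : Fin M → ℝ. -/

import Mathlib

open scoped BigOperators

attribute [local instance] Classical.propDecidable

/-- Probability of an event on a finite probability space given by a mass function. -/
noncomputable def Pr {Ω : Type*} [Fintype Ω] (P : Ω → ℝ) (E : Ω → Prop) : ℝ :=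
  ∑ ω, if E ω then P ω else 0

/-- Discrete mutual information `I(U;V)` (convention: terms with zero joint
probability contribute `0`). -/
noncomputable def mi {Ω α β : Type*} [Fintype Ω] [Fintype α] [Fintype β]
    (P : Ω → ℝ) (U : Ω → α) (V : Ω → β) : ℝ :=
  ∑ a : α, ∑ b : β,
    if Pr P (fun ω => U ω = a ∧ V ω = b) = 0 then 0
    else Pr P (fun ω => U ω = a ∧ V ω = b) *
      Real.log (Pr P (fun ω => U ω = a ∧ V ω = b) /
        (Pr P (fun ω => U ω = a) * Pr P (fun ω => V ω = b)))

/-- Shannon entropy `H(U)` (convention: `0 log 0 = 0`). -/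
noncomputable def ent {Ω α : Type*} [Fintype Ω] [Fintype α]
    (P : Ω → ℝ) (U : Ω → α) : ℝ :=
  -∑ a : α,
    if Pr P (fun ω => U ω = a) = 0 then 0
    else Pr P (fun ω => U ω = a) * Real.log (Pr P (fun ω => U ω = a))

/-- Conditional entropy `H(U|V)` (convention: terms with zero joint probability
contribute `0`). -/
noncomputable def condEnt {Ω α β : Type*} [Fintype Ω] [Fintype α] [Fintype β]
    (P : Ω → ℝ) (U : Ω → α) (V : Ω → β) : ℝ :=
  -∑ a : α, ∑ b : β,
    if Pr P (fun ω => U ω = a ∧ V ω = b) = 0 then 0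
    else Pr P (fun ω => U ω = a ∧ V ω = b) *
      Real.log (Pr P (fun ω => U ω = a ∧ V ω = b) / Pr P (fun ω => V ω = b))

noncomputable def sigmoid (x : ℝ) : ℝ := 1 / (1 + Real.exp (-x))

lemma Pr_congr {Ω : Type*} [Fintype Ω] (P : Ω → ℝ) {E F : Ω → Prop}
    (h : ∀ ω, E ω ↔ F ω) : Pr P E = Pr P F := by
  unfold Pr
  exact Finset.sum_congr rfl (fun ω _ => by simp [h ω])

lemma Pr_mono {Ω : Type*} [Fintype Ω] {P : Ω → ℝ} (hP : ∀ ω, 0 ≤ P ω) {E F : Ω → Prop}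
    (h : ∀ ω, E ω → F ω) : Pr P E ≤ Pr P F := by
  unfold Pr
  apply Finset.sum_le_sum
  intro ω _
  by_cases hE : E ω
  · simp [hE, h ω hE]
  · simp only [hE, if_false]
    split
    · exact hP ω
    · exact le_refl 0

lemma Pr_split {Ω : Type*} [Fintype Ω] (P : Ω → ℝ) (y : Ω → Fin 2) (E : Ω → Prop) :
    Pr P E = Pr P (fun ω => y ω = 0 ∧ E ω) + Pr P (fun ω => y ω = 1 ∧ E ω) := by
  unfold Pr
  rw [← Finset.sum_add_distrib]
  apply Finset.sum_congr rfl
  intro ω _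
  have h : y ω = 0 ∨ y ω = 1 := by
    have := (y ω).isLt
    omega
  by_cases hE : E ω <;> rcases h with h | h <;> simp [hE, h]

lemma sigmoid_pos (x : ℝ) : 0 < sigmoid x := by
  unfold sigmoid
  positivity

lemma sigmoid_lt_one (x : ℝ) : sigmoid x < 1 := by
  unfold sigmoid
  rw [div_lt_one (by positivity)]
  have := Real.exp_pos (-x)
  linarith

lemma sigmoid_neg (x : ℝ) : sigmoid (-x) = 1 - sigmoid x := by
  unfold sigmoid
  have h1 : (1:ℝ) + Real.exp (-x) ≠ 0 := by positivity
  have h2 : (1:ℝ) + Real.exp x ≠ 0 := by positivity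
  have hx : Real.exp x * Real.exp (-x) = 1 := by
    rw [← Real.exp_add]; simp
  field_simp
  nlinarith [hx]

lemma sigmoid_log_div {a b : ℝ} (ha : 0 < a) (hb : 0 < b) :
    sigmoid (Real.log (a / b)) = a / (a + b) := by
  unfold sigmoid
  rw [← Real.log_inv, Real.exp_log (by positivity)]
  rw [inv_div]
  field_simp

lemma gibbs {a b q : ℝ} (ha : 0 < a) (hb : 0 < b) (hq0 : 0 < q) (hq1 : q < 1) :
    a * Real.log q + b * Real.log (1 - q) ≤
      a * Real.log (a / (a + b)) + b * Real.log (b / (a + b)) := by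
  have hs : 0 < a + b := by linarith
  have h1 : a * Real.log q - a * Real.log (a / (a + b)) ≤ q * (a + b) - a := by
    have hlog : Real.log (q * (a + b) / a) ≤ q * (a + b) / a - 1 :=
      Real.log_le_sub_one_of_pos (by positivity)
    have heq : Real.log (q * (a + b) / a) = Real.log q - Real.log (a / (a + b)) := by
      rw [Real.log_div (by positivity) (ne_of_gt ha),
        Real.log_mul (ne_of_gt hq0) (ne_of_gt hs),
        Real.log_div (ne_of_gt ha) (ne_of_gt hs)]
      ring
    have := mul_le_mul_of_nonneg_left hlog ha.le
    rw [heq] at this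
    have harith : a * (q * (a + b) / a - 1) = q * (a + b) - a := by
      field_simp
    rw [harith] at this
    linarith [this]
  have h2 : b * Real.log (1 - q) - b * Real.log (b / (a + b)) ≤ (1 - q) * (a + b) - b := by
    have hlog : Real.log ((1 - q) * (a + b) / b) ≤ (1 - q) * (a + b) / b - 1 :=
      Real.log_le_sub_one_of_pos (div_pos (by nlinarith) hb)
    have heq : Real.log ((1 - q) * (a + b) / b) =
        Real.log (1 - q) - Real.log (b / (a + b)) := by
      rw [Real.log_div (by nlinarith : (1 - q) * (a + b) ≠ 0) (ne_of_gt hb),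
        Real.log_mul (by linarith) (ne_of_gt hs),
        Real.log_div (ne_of_gt hb) (ne_of_gt hs)]
      ring
    have := mul_le_mul_of_nonneg_left hlog hb.le
    rw [heq] at this
    have harith : b * ((1 - q) * (a + b) / b - 1) = (1 - q) * (a + b) - b := by
      field_simp
    rw [harith] at this
    linarith [this]
  nlinarith [h1, h2]

/-- Coordinate-descent monotonicity for I-Max: the log-odds update of the bin
parameters does not increase the surrogate loss. -/
theorem imax_coordinate_descent_monotone {Ω : Type*} [Fintype Ω] {M : ℕ}
    (P : Ω → ℝ) (hP : ∀ ω, 0 ≤ P ω) (hsum : ∑ ω, P ω = 1)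
    (y : Ω → Fin 2) (m : Ω → Fin M)
    (hm : ∀ i : Fin M, 0 < Pr P (fun ω => m ω = i))
    (hcond : ∀ i : Fin M,
      Pr P (fun ω => y ω = 1 ∧ m ω = i) / Pr P (fun ω => m ω = i) ∈ Set.Ioo (0:ℝ) 1)
    (L : (Fin M → ℝ) → ℝ)
    (hL : L = fun φ => ∑ i : Fin M, ∑ y' : Fin 2,
      Pr P (fun ω => m ω = i ∧ y ω = y') *
        Real.log (Pr P (fun ω => y ω = y') /
          sigmoid ((2 * ((y' : ℕ) : ℝ) - 1) * φ i)))
    (φ' : Fin M → ℝ)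
    (hφ' : φ' = fun i => Real.log
      ((Pr P (fun ω => y ω = 1 ∧ m ω = i) / Pr P (fun ω => m ω = i)) /
       (Pr P (fun ω => y ω = 0 ∧ m ω = i) / Pr P (fun ω => m ω = i)))) :
    ∀ φ : Fin M → ℝ, L φ' ≤ L φ := by
  subst hL hφ'
  intro φ
  apply Finset.sum_le_sum
  intro i _
  set a := Pr P (fun ω => y ω = 1 ∧ m ω = i) with ha
  set b := Pr P (fun ω => y ω = 0 ∧ m ω = i) with hb
  set c := Pr P (fun ω => m ω = i) with hc
  have hcpos : 0 < c := hm i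
  obtain ⟨h1, h2⟩ := hcond i
  have hapos : 0 < a := by
    have := mul_pos h1 hcpos
    rwa [div_mul_cancel₀ _ (ne_of_gt hcpos)] at this
  have hsplit : c = b + a := Pr_split P y _
  have hbpos : 0 < b := by
    have hac : a < c := (div_lt_one hcpos).mp h2
    linarith
  have e0 : Pr P (fun ω => m ω = i ∧ y ω = (0 : Fin 2)) = b :=
    Pr_congr P (fun ω => and_comm)
  have e1 : Pr P (fun ω => m ω = i ∧ y ω = (1 : Fin 2)) = a :=
    Pr_congr P (fun ω => and_comm)
  have hA0 : 0 < Pr P (fun ω => y ω = (0 : Fin 2)) :=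
    lt_of_lt_of_le hbpos (Pr_mono hP (fun ω h => h.1))
  have hA1 : 0 < Pr P (fun ω => y ω = (1 : Fin 2)) :=
    lt_of_lt_of_le hapos (Pr_mono hP (fun ω h => h.1))
  have hdiv : a / c / (b / c) = a / b := by
    field_simp
  rw [Fin.sum_univ_two, Fin.sum_univ_two, e0, e1]
  beta_reduce
  rw [hdiv]
  simp only [Fin.val_zero, Fin.val_one, Nat.cast_zero, Nat.cast_one]
  norm_num
  have hs1 : sigmoid (Real.log (a / b)) = a / (a + b) := sigmoid_log_div hapos hbpos
  have hs0 : sigmoid (-Real.log (a / b)) = b / (a + b) := by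
    rw [sigmoid_neg, hs1]
    field_simp
    ring
  set q := sigmoid (φ i) with hqdef
  have hq0 : 0 < q := sigmoid_pos _
  have hq1 : q < 1 := sigmoid_lt_one _
  have hqneg : sigmoid (-φ i) = 1 - q := sigmoid_neg _
  rw [hs0, hs1, hqneg]
  have habs : 0 < a + b := by linarith
  rw [Real.log_div (ne_of_gt hA0) (ne_of_gt (div_pos hbpos habs)),
    Real.log_div (ne_of_gt hA1) (ne_of_gt (div_pos hapos habs)),
    Real.log_div (ne_of_gt hA0) (by linarith : (1:ℝ) - q ≠ 0),
    Real.log_div (ne_of_gt hA1) (ne_of_gt hq0)]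
  have key := gibbs hapos hbpos hq0 hq1
  nlinarith [key]
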